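/- Let R, r > 0 and q₁ = 1/(2R) + 1/(2r). Let f_R, f_{-r} ∈ L¹(ℝ;ℂ) with ∫ f_R + ∫ f_{-r} = 0, and define G_R(y) = -(1/(2π)) ∫_ℝ (q₁/(q₁² + (y-t)²)) f_{-r}(t) dt and G_{-r}(y) = -(1/(2π)) ∫_ℝ (q₁/(q₁² + (y-t)²)) f_R(t) dt. Then for every k ∈ ℝ, Ĝ_R(k) = -(1/2) e^{-q₁|k|} f̂_{-r}(k) and Ĝ_{-r}(k) = -(1/2) e^{-q₁|k|} f̂_R(k); in diagonalized form, (Ĝ_{-r} - Ĝ_R)/√2 = (1/2) e^{-q₁|k|} (f̂_{-r} - f̂_R)/√2 and (Ĝ_{-r} + Ĝ_R)/√2 = -(1/2) e^{-q₁|k|} (f̂_{-r} + f̂_R)/√2. -/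

import Mathlib

/-!
The Fourier transform of `e^{-q|t|}` is `2q/(q² + k²)`, computed separately on the two
half-lines. Fourier inversion turns this around: the Cauchy kernel `q/(q² + u²)` has Fourier
transform `π e^{-q|k|}`. As `negPoissonConv q f` is `-1/(2π)` times the convolution of `f` with
this kernel, the convolution theorem makes it act on the frequency side as multiplication by
`-(1/2) e^{-q|k|}`; the diagonalized identities are the sum and difference of the two.
-/

open MeasureTheory Set Real

noncomputable section

/-- The unnormalized Fourier transform `ĝ(k) = ∫ g(t) e^{-ikt} dt`. -/
def fourierHat (g : ℝ → ℂ) (k : ℝ) : ℂ :=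
  ∫ t : ℝ, g t * Complex.exp (-(Complex.I * k * t))

/-- The negative Poisson-kernel convolution
`-(1/(2π)) ∫ q₁/(q₁² + (y-t)²) f(t) dt`. -/
def negPoissonConv (q₁ : ℝ) (f : ℝ → ℂ) (y : ℝ) : ℂ :=
  -((1/(2*π) : ℝ) : ℂ) * ∫ t : ℝ, ((q₁ / (q₁^2 + (y - t)^2) : ℝ) : ℂ) * f t

open scoped FourierTransform Convolution

lemma fourierHat_eq_fourier (g : ℝ → ℂ) (k : ℝ) : fourierHat g k = 𝓕 g (k / (2 * π)) := by
  rw [Real.fourier_real_eq_integral_exp_smul, fourierHat]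
  congr 1 with t
  rw [smul_eq_mul, mul_comm]
  congr 2
  push_cast
  field_simp

lemma fourierHat_const_mul (c : ℂ) (g : ℝ → ℂ) (k : ℝ) :
    fourierHat (fun t ↦ c * g t) k = c * fourierHat g k := by
  simp only [fourierHat, mul_assoc, integral_const_mul]

lemma fourierHat_mul_convolution {f g : ℝ → ℂ} (hf : Integrable f) (hg : Integrable g) (k : ℝ) :
    fourierHat (f ⋆[ContinuousLinearMap.mul ℂ ℂ] g) k = fourierHat f k * fourierHat g k := by
  simp only [fourierHat_eq_fourier, Real.fourier_mul_convolution_eq hf hg]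

lemma fourierHat_fourierHat {g : ℝ → ℂ} (hg : Integrable g) (hĝ : Integrable (fourierHat g))
    {x : ℝ} (hx : ContinuousAt g (-x)) :
    fourierHat (fourierHat g) x = 2 * π * g (-x) := by
  have hπ : (2 * π : ℝ) ≠ 0 := by positivity
  have h𝓕 : Integrable (𝓕 g) := by
    refine (hĝ.comp_mul_left' hπ).congr (Filter.Eventually.of_forall fun ξ ↦ ?_)
    simp only [fourierHat_eq_fourier, mul_div_cancel_left₀ _ hπ]
  have hinv := hg.fourierInv_fourier_eq h𝓕 hx
  rw [Real.fourierInv_eq'] at hinv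
  set Φ : ℝ → ℂ := fun ξ ↦ 𝓕 g ξ * Complex.exp (-(Complex.I * ↑(2 * π * ξ) * x))
  calc fourierHat (fourierHat g) x = ∫ k, Φ (k / (2 * π)) := by
        rw [fourierHat]
        congr 1 with k
        simp only [Φ, fourierHat_eq_fourier, mul_div_cancel₀ _ hπ]
        ring_nf
    _ = 2 * π * g (-x) := by
      rw [Measure.integral_comp_div, abs_of_pos (by positivity), Complex.real_smul, ← hinv]
      push_cast
      congr 1
      refine integral_congr_ae (Filter.Eventually.of_forall fun ξ ↦ ?_)
      simp only [Φ, smul_eq_mul, RCLike.inner_apply, conj_trivial]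
      rw [mul_comm]
      congr 2
      push_cast
      ring

/-- `π` times the density `ProbabilityTheory.cauchyPDFReal 0 q` of the Cauchy distribution. -/
def cauchyKernel (q u : ℝ) : ℂ := ((q / (q ^ 2 + u ^ 2) : ℝ) : ℂ)

lemma integrable_cauchyKernel {q : ℝ} (hq : 0 < q) : Integrable (cauchyKernel q) := by
  have h : Integrable fun u : ℝ ↦ q / (q ^ 2 + u ^ 2) := by
    refine ((ProbabilityTheory.integrable_cauchyPDFReal 0 (γ := q.toNNReal)).const_mul π).congr
      (Filter.Eventually.of_forall fun u ↦ ?_)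
    simp only [ProbabilityTheory.cauchyPDFReal_def, Real.coe_toNNReal q hq.le, sub_zero]
    field_simp
    ring
  exact h.ofReal

def twoSidedExp (q t : ℝ) : ℂ := (Real.exp (-(q * |t|)) : ℂ)

section

open Complex

lemma twoSidedExp_mul_eqOn_Iic (q k : ℝ) :
    EqOn (fun t : ℝ ↦ twoSidedExp q t * exp (-(I * k * t))) (fun t ↦ exp ((q - I * k) * t))
      (Iic 0) := fun t ht ↦ by
  simp only [twoSidedExp, abs_of_nonpos (mem_Iic.1 ht), ofReal_exp, ← Complex.exp_add]
  push_cast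
  ring_nf

lemma twoSidedExp_mul_eqOn_Ioi (q k : ℝ) :
    EqOn (fun t : ℝ ↦ twoSidedExp q t * exp (-(I * k * t))) (fun t ↦ exp ((-q - I * k) * t))
      (Ioi 0) := fun t ht ↦ by
  simp only [twoSidedExp, abs_of_pos (mem_Ioi.1 ht), ofReal_exp, ← Complex.exp_add]
  push_cast
  ring_nf

lemma integrable_twoSidedExp_mul {q : ℝ} (hq : 0 < q) (k : ℝ) :
    Integrable (fun t : ℝ ↦ twoSidedExp q t * exp (-(I * k * t))) := by
  rw [← integrableOn_univ, ← Iic_union_Ioi (a := 0), integrableOn_union]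
  exact ⟨(integrableOn_exp_mul_complex_Iic (by simpa) 0).congr_fun
      (twoSidedExp_mul_eqOn_Iic q k).symm measurableSet_Iic,
    (integrableOn_exp_mul_complex_Ioi (by simpa) 0).congr_fun
      (twoSidedExp_mul_eqOn_Ioi q k).symm measurableSet_Ioi⟩

lemma integrable_twoSidedExp {q : ℝ} (hq : 0 < q) : Integrable (twoSidedExp q) := by
  simpa using integrable_twoSidedExp_mul hq 0

lemma fourierHat_twoSidedExp {q : ℝ} (hq : 0 < q) (k : ℝ) :
    fourierHat (twoSidedExp q) k = 2 * cauchyKernel q k := by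
  have hint := integrable_twoSidedExp_mul hq k
  have hIic : (q - I * k) ≠ 0 := fun h ↦ by simpa [hq.ne'] using congrArg re h
  have hIoi : (-q - I * k) ≠ 0 := fun h ↦ by simpa [hq.ne'] using congrArg re h
  rw [fourierHat, ← intervalIntegral.integral_Iic_add_Ioi hint.integrableOn hint.integrableOn,
    setIntegral_congr_fun measurableSet_Iic (twoSidedExp_mul_eqOn_Iic q k),
    setIntegral_congr_fun measurableSet_Ioi (twoSidedExp_mul_eqOn_Ioi q k),
    integral_exp_mul_complex_Iic (by simpa), integral_exp_mul_complex_Ioi (by simpa), cauchyKernel]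
  have hden : (q : ℂ) ^ 2 + (k : ℂ) ^ 2 ≠ 0 := by exact_mod_cast (by positivity : q ^ 2 + k ^ 2 ≠ 0)
  simp only [ofReal_zero, mul_zero, Complex.exp_zero]
  push_cast
  field_simp
  linear_combination (-2 * q * k ^ 2 : ℂ) * I_sq

end

lemma fourierHat_cauchyKernel {q : ℝ} (hq : 0 < q) (k : ℝ) :
    fourierHat (cauchyKernel q) k = ((π * Real.exp (-(q * |k|)) : ℝ) : ℂ) := by
  have hhat : fourierHat (twoSidedExp q) = fun u ↦ 2 * cauchyKernel q u :=
    funext (fourierHat_twoSidedExp hq)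
  have hcont : Continuous (twoSidedExp q) := by unfold twoSidedExp; fun_prop
  have hinv := fourierHat_fourierHat (integrable_twoSidedExp hq)
    (hhat ▸ (integrable_cauchyKernel hq).const_mul 2) (x := k) hcont.continuousAt
  rw [hhat, fourierHat_const_mul, twoSidedExp, abs_neg] at hinv
  rw [Complex.ofReal_mul]
  linear_combination hinv / 2

lemma negPoissonConv_eq_convolution (q : ℝ) (f : ℝ → ℂ) :
    negPoissonConv q f =
      fun y ↦ -((1 / (2 * π) : ℝ) : ℂ) * (f ⋆[ContinuousLinearMap.mul ℂ ℂ] cauchyKernel q) y := by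
  funext y
  rw [negPoissonConv, convolution_def]
  congr 2 with t
  exact mul_comm _ _

theorem fourierHat_negPoissonConv {q : ℝ} (hq : 0 < q) {f : ℝ → ℂ} (hf : Integrable f) (k : ℝ) :
    fourierHat (negPoissonConv q f) k
      = -((1 / 2 * Real.exp (-(q * |k|)) : ℝ) : ℂ) * fourierHat f k := by
  rw [negPoissonConv_eq_convolution, fourierHat_const_mul,
    fourierHat_mul_convolution hf (integrable_cauchyKernel hq), fourierHat_cauchyKernel hq]
  have hπ : (π : ℂ) ≠ 0 := Complex.ofReal_ne_zero.2 pi_ne_zero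
  push_cast
  field_simp

theorem touchingDisks_NP_frequency_realization_general
    (R r : ℝ) (hR : 0 < R) (hr : 0 < r)
    (fR fmr : ℝ → ℂ) (hfR : Integrable fR) (hfmr : Integrable fmr) :
    ∀ k : ℝ,
      fourierHat (negPoissonConv (1/(2*R) + 1/(2*r)) fmr) k
        = -((1/2 * Real.exp (-((1/(2*R) + 1/(2*r)) * |k|)) : ℝ) : ℂ) * fourierHat fmr k ∧
      fourierHat (negPoissonConv (1/(2*R) + 1/(2*r)) fR) k
        = -((1/2 * Real.exp (-((1/(2*R) + 1/(2*r)) * |k|)) : ℝ) : ℂ) * fourierHat fR k ∧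
      (fourierHat (negPoissonConv (1/(2*R) + 1/(2*r)) fR) k
          - fourierHat (negPoissonConv (1/(2*R) + 1/(2*r)) fmr) k) / ((Real.sqrt 2 : ℝ) : ℂ)
        = ((1/2 * Real.exp (-((1/(2*R) + 1/(2*r)) * |k|)) : ℝ) : ℂ) *
            ((fourierHat fmr k - fourierHat fR k) / ((Real.sqrt 2 : ℝ) : ℂ)) ∧
      (fourierHat (negPoissonConv (1/(2*R) + 1/(2*r)) fR) k
          + fourierHat (negPoissonConv (1/(2*R) + 1/(2*r)) fmr) k) / ((Real.sqrt 2 : ℝ) : ℂ)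
        = -((1/2 * Real.exp (-((1/(2*R) + 1/(2*r)) * |k|)) : ℝ) : ℂ) *
            ((fourierHat fmr k + fourierHat fR k) / ((Real.sqrt 2 : ℝ) : ℂ)) := by
  intro k
  have hq : 0 < 1/(2*R) + 1/(2*r) := by positivity
  have hGR := fourierHat_negPoissonConv hq hfmr k
  have hGr := fourierHat_negPoissonConv hq hfR k
  refine ⟨hGR, hGr, ?_, ?_⟩ <;> rw [hGR, hGr] <;> ring

/-- Frequency-domain realization of the Neumann–Poincaré operator of
the touching-disks domain (`q₁ = 1/(2R) + 1/(2r)`): for mean-zero `f_R, f_{-r} ∈ L¹`,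
the weighted boundary values `G_R = -(P_{q₁} * f_{-r})` and `G_{-r} = -(P_{q₁} * f_R)`
satisfy `Ĝ_R(k) = -(1/2)e^{-q₁|k|} f̂_{-r}(k)` and `Ĝ_{-r}(k) = -(1/2)e^{-q₁|k|} f̂_R(k)`
for all `k`; in diagonalized form
`(Ĝ_{-r} - Ĝ_R)/√2 = (1/2)e^{-q₁|k|}(f̂_{-r} - f̂_R)/√2` and
`(Ĝ_{-r} + Ĝ_R)/√2 = -(1/2)e^{-q₁|k|}(f̂_{-r} + f̂_R)/√2`. -/
theorem touchingDisks_NP_frequency_realization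
    (R r : ℝ) (hR : 0 < R) (hr : 0 < r)
    (fR fmr : ℝ → ℂ) (hfR : Integrable fR) (hfmr : Integrable fmr)
    (hmean : (∫ t : ℝ, fR t) + (∫ t : ℝ, fmr t) = 0) :
    ∀ k : ℝ,
      fourierHat (negPoissonConv (1/(2*R) + 1/(2*r)) fmr) k
        = -((1/2 * Real.exp (-((1/(2*R) + 1/(2*r)) * |k|)) : ℝ) : ℂ) * fourierHat fmr k ∧
      fourierHat (negPoissonConv (1/(2*R) + 1/(2*r)) fR) k
        = -((1/2 * Real.exp (-((1/(2*R) + 1/(2*r)) * |k|)) : ℝ) : ℂ) * fourierHat fR k ∧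
      (fourierHat (negPoissonConv (1/(2*R) + 1/(2*r)) fR) k
          - fourierHat (negPoissonConv (1/(2*R) + 1/(2*r)) fmr) k) / ((Real.sqrt 2 : ℝ) : ℂ)
        = ((1/2 * Real.exp (-((1/(2*R) + 1/(2*r)) * |k|)) : ℝ) : ℂ) *
            ((fourierHat fmr k - fourierHat fR k) / ((Real.sqrt 2 : ℝ) : ℂ)) ∧
      (fourierHat (negPoissonConv (1/(2*R) + 1/(2*r)) fR) k
          + fourierHat (negPoissonConv (1/(2*R) + 1/(2*r)) fmr) k) / ((Real.sqrt 2 : ℝ) : ℂ)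
        = -((1/2 * Real.exp (-((1/(2*R) + 1/(2*r)) * |k|)) : ℝ) : ℂ) *
            ((fourierHat fmr k + fourierHat fR k) / ((Real.sqrt 2 : ℝ) : ℂ)) :=
  touchingDisks_NP_frequency_realization_general R r hR hr fR fmr hfR hfmr

end
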